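/- For n ≥ 0 and all t, t^n = Σ_{k=0}^{n} S_B[n,k] · (t - [1]_q)(t - [3]_q)···(t - [2k-1]_q), where the empty product is 1. -/
import Mathlib


open Finset Polynomial

/-- `[m]_q = 1 + q + ... + q^{m-1}`. -/
def qnat {R : Type*} [CommRing R] (q : R) (m : ℕ) : R := ∑ i ∈ Finset.range m, q ^ i

/-- The type B q-Stirling numbers of the second kind:
`S_B[n,k] = S_B[n-1,k-1] + [2k+1]_q S_B[n-1,k]`, `S_B[0,k] = δ_{0k}`. -/
noncomputable def qStirB : ℕ → ℕ → Polynomial ℤ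
  | 0, 0 => 1
  | 0, _ + 1 => 0
  | n + 1, 0 => qnat X 1 * qStirB n 0
  | n + 1, k + 1 => qStirB n k + qnat X (2 * (k + 1) + 1) * qStirB n (k + 1)

lemma qStirB_eq_zero : ∀ n k : ℕ, n < k → qStirB n k = 0
  | 0, _ + 1, _ => rfl
  | n + 1, k + 1, h => by
      have h1 : n < k := by omega
      have h2 : n < k + 1 := by omega
      simp [qStirB, qStirB_eq_zero n k h1, qStirB_eq_zero n (k + 1) h2]

/-- `t^n = Σ_{k=0}^n S_B[n,k] (t-[1]_q)(t-[3]_q)⋯(t-[2k-1]_q)`, as an identity in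
`ℤ[q][t]` (here `t` is the outer variable `X` and `q` the inner one). -/
theorem stmt15 (n : ℕ) :
    (X : Polynomial (Polynomial ℤ)) ^ n =
      ∑ k ∈ Finset.range (n + 1),
        C (qStirB n k) * ∏ i ∈ Finset.range k, (X - C (qnat X (2 * i + 1))) := by
  induction n with
  | zero => simp [qStirB]
  | succ n ih =>
    set P : ℕ → Polynomial (Polynomial ℤ) :=
      fun k => ∏ i ∈ Finset.range k, (X - C (qnat X (2 * i + 1))) with hP
    have key : ∀ k : ℕ, (X : Polynomial (Polynomial ℤ)) * (C (qStirB n k) * P k)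
        = C (qStirB n k) * P (k + 1) + C (qnat X (2 * k + 1) * qStirB n k) * P k := by
      intro k
      have : P (k + 1) = P k * (X - C (qnat X (2 * k + 1))) := Finset.prod_range_succ _ _
      rw [this]
      simp only [map_mul]
      ring
    have h1 : (X : Polynomial (Polynomial ℤ)) ^ (n + 1) = X * X ^ n := by ring
    rw [h1, ih, Finset.mul_sum]
    rw [Finset.sum_congr rfl (fun k _ => key k), Finset.sum_add_distrib]
    rw [Finset.sum_range_succ'
      (fun k => C (qnat X (2 * k + 1) * qStirB n k) * P k) n]
    rw [Finset.sum_range_succ' (fun k => C (qStirB (n + 1) k) * P k) (n + 1)]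
    have hz : C (qStirB n (n + 1)) * P (n + 1) = 0 := by
      rw [qStirB_eq_zero n (n + 1) (by omega)]; simp
    have main : ∀ k ∈ Finset.range (n + 1),
        C (qStirB (n + 1) (k + 1)) * P (k + 1)
          = C (qStirB n k) * P (k + 1)
            + C (qnat X (2 * (k + 1) + 1) * qStirB n (k + 1)) * P (k + 1) := by
      intro k _
      simp [qStirB, map_add, map_mul]; ring
    rw [Finset.sum_congr rfl main, Finset.sum_add_distrib]
    rw [Finset.sum_range_succ
      (fun k => C (qnat X (2 * (k + 1) + 1) * qStirB n (k + 1)) * P (k + 1)) n]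
    rw [qStirB_eq_zero n (n + 1) (by omega)]
    simp [qStirB]
    ring
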